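/- If U(λ) is a continuous function on (σ, τ) with values in the unitary complex 2n × 2n matrices such that rank(U(λ) − 1) is constant on (σ, τ), then the matrix-function A(λ) := (1/2π) ∮_Γ ((z+1)/(z−1)) (U(λ) − z)⁻¹ dz, where Γ is a positively oriented contour whose interior does not contain the point 1 but contains all eigenvalues of U(λ) different from 1, is continuous on (σ, τ). -/

import Mathlib

open MeasureTheory Set Filter Topology intervalIntegral

/-- The bilinear pairing `⟨Y, Z⟩ = ∑ i, Y i * conj (Z i)` on `ℂ^N` (linear in the first
argument, conjugate-linear in the second). -/
noncomputable def cInner {N : ℕ} (Y Z : Fin N → ℂ) : ℂ := ∑ i, Y i * (starRingEnd ℂ) (Z i)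

/-- `A = (1/2π) ∮_Γ ((z+1)/(z−1)) (U − z)⁻¹ dz`, where `Γ` is a positively oriented contour
whose interior does not contain `1` but contains all eigenvalues of the unitary matrix `U`
different from `1`.  Equivalently (holomorphic functional calculus / Riesz projections):
`A` vanishes on `ker (U − 1)` and `A (U − 1) x = −i (U + 1) x` for `x ⊥ ker (U − 1)`. -/
def IsCayleyBoundaryMatrix {N : ℕ} (U A : Matrix (Fin N) (Fin N) ℂ) : Prop :=
  (∀ v : Fin N → ℂ, U.mulVec v = v → A.mulVec v = 0) ∧
  (∀ x : Fin N → ℂ, (∀ v : Fin N → ℂ, U.mulVec v = v → cInner x v = 0) →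
    A.mulVec ((U - 1).mulVec x) = (-Complex.I) • (U + 1).mulVec x)

/-! On `(ker (U - 1))ᗮ = range (U - 1)` the matrix `A` is pinned down by its defining
relation, which yields the closed formula `A = -i (U + 1) (1 - P) (U - 1 + P)⁻¹`, where `P` is the
orthogonal projection onto `ker (U - 1)`; `U - 1 + P` is invertible because `U - 1` is normal.
So it suffices that `P` depends continuously on `λ`. Orthogonal projections lie in the compact
unit ball, and every cluster point `Q` of `P(λ)` as `λ → λ₀` is an orthogonal projection with
`(U(λ₀) - 1) Q = 0` and `trace Q = dim ker (U(λ) - 1)`. Constant rank makes this trace equal to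
`dim ker (U(λ₀) - 1)`, which forces `Q = P(λ₀)`. -/

open Module

theorem isClosed_setOf_isStarProjection {R : Type*} [Mul R] [Star R] [TopologicalSpace R]
    [T2Space R] [ContinuousMul R] [ContinuousStar R] : IsClosed {p : R | IsStarProjection p} := by
  have : {p : R | IsStarProjection p} = {p | p * p = p} ∩ {p | star p = p} := by
    ext p; exact ⟨fun h => ⟨h.1, h.2⟩, fun h => ⟨h.1, h.2⟩⟩
  rw [this]
  exact (isClosed_eq (continuous_id.mul continuous_id) continuous_id).inter
    (isClosed_eq continuous_star continuous_id)

theorem isStarNormal_sub_one_of_mem_unitary {R : Type*} [Ring R] [StarRing R] {u : R}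
    (hu : u ∈ unitary R) : IsStarNormal (u - 1) :=
  have := isStarNormal_of_mem_unitary hu
  have hcomm : Commute u (star 1) := by rw [star_one]; exact Commute.one_right u
  hcomm.isStarNormal_sub

namespace ContinuousLinearMap

section
variable {𝕜 E : Type*} [RCLike 𝕜] [NormedAddCommGroup E] [NormedSpace 𝕜 E]
  [FiniteDimensional 𝕜 E]

theorem continuous_trace : Continuous fun p : E →L[𝕜] E => LinearMap.trace 𝕜 E p :=
  ((LinearMap.trace 𝕜 E).comp (coeLM 𝕜)).continuous_of_finiteDimensional

theorem trace_eq_finrank_range {p : E →L[𝕜] E} (hp : IsIdempotentElem p) :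
    LinearMap.trace 𝕜 E p = finrank 𝕜 p.range :=
  ((LinearMap.isProj_range_iff_isIdempotentElem _).mpr
    (isIdempotentElem_toLinearMap_iff.mpr hp)).trace

end

variable {𝕜 E : Type*} [RCLike 𝕜] [NormedAddCommGroup E] [InnerProductSpace 𝕜 E]
  [CompleteSpace E]

theorem mul_starProjection_ker (T : E →L[𝕜] E) : T * T.ker.starProjection = 0 := by
  ext x
  exact T.ker.starProjection_apply_mem x

theorem mul_add_starProjection_ker {M R S : E →L[𝕜] E} (hker : ∀ v ∈ M.ker, S v = 0)
    (horth : ∀ x ∈ M.kerᗮ, S (M x) = R x) :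
    S * (M + M.ker.starProjection) = R * (1 - M.ker.starProjection) := by
  ext x
  have hMP : M (M.ker.starProjection x) = 0 := M.ker.starProjection_apply_mem x
  calc S (M x + M.ker.starProjection x) = S (M (x - M.ker.starProjection x)) := by
        rw [map_add, hker _ (M.ker.starProjection_apply_mem x), add_zero, map_sub, hMP, sub_zero]
    _ = R (x - M.ker.starProjection x) := horth _ (M.ker.sub_starProjection_mem_orthogonal x)

variable [FiniteDimensional 𝕜 E]

theorem eq_starProjection_ker_of_mul_eq_zero {T Q : E →L[𝕜] E} (hQ : IsStarProjection Q)
    (hTQ : T * Q = 0) (htr : LinearMap.trace 𝕜 E Q = finrank 𝕜 T.ker) :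
    Q = T.ker.starProjection := by
  obtain ⟨_, hQ_eq⟩ := isStarProjection_iff_eq_starProjection_range.mp hQ
  have hle : Q.range ≤ T.ker := by
    rintro _ ⟨x, rfl⟩
    exact congr($hTQ x)
  have hfin : finrank 𝕜 Q.range = finrank 𝕜 T.ker := by
    rw [trace_eq_finrank_range hQ.isIdempotentElem] at htr
    exact_mod_cast htr
  calc Q = Q.range.starProjection := hQ_eq
    _ = T.ker.starProjection := by
      congr 1
      exact Submodule.eq_of_le_of_finrank_eq hle hfin

theorem continuousOn_starProjection_ker {X : Type*} [TopologicalSpace X] {s : Set X}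
    {F : X → E →L[𝕜] E} (hF : ContinuousOn F s)
    (hdim : ∀ x ∈ s, ∀ y ∈ s, finrank 𝕜 (F x).ker = finrank 𝕜 (F y).ker) :
    ContinuousOn (fun x => (F x).ker.starProjection) s := by
  intro x₀ hx₀
  have := FiniteDimensional.proper 𝕜 (E →L[𝕜] E)
  refine (isCompact_closedBall 0 1).tendsto_nhds_of_unique_mapClusterPt
    (Eventually.of_forall fun x => mem_closedBall_zero_iff.mpr
      (isStarProjection_starProjection.norm_le)) fun Q _ hQ => ?_
  obtain ⟨𝒰, h𝒰, hPQ⟩ := mapClusterPt_iff_ultrafilter.mp hQ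
  have hF𝒰 : Tendsto F 𝒰 (𝓝 (F x₀)) := (hF x₀ hx₀).mono_left h𝒰
  refine eq_starProjection_ker_of_mul_eq_zero ?_ ?_ ?_
  · exact isClosed_setOf_isStarProjection.mem_of_tendsto hPQ
      (Eventually.of_forall fun _ => isStarProjection_starProjection)
  · have := hF𝒰.mul hPQ
    simp only [mul_starProjection_ker] at this
    exact tendsto_nhds_unique this tendsto_const_nhds
  · refine tendsto_nhds_unique ((continuous_trace.tendsto Q).comp hPQ)
      (tendsto_const_nhds.congr' ?_)
    filter_upwards [h𝒰 self_mem_nhdsWithin] with x hx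
    rw [Function.comp_apply,
      trace_eq_finrank_range isStarProjection_starProjection.isIdempotentElem,
      Submodule.range_starProjection, hdim x hx x₀ hx₀]

theorem isUnit_add_starProjection_ker {M : E →L[𝕜] E} (hM : IsStarNormal M) :
    IsUnit (M + M.ker.starProjection) := by
  rw [isUnit_iff_isUnit_toLinearMap, LinearMap.isUnit_iff_ker_eq_bot, LinearMap.ker_eq_bot']
  intro x hx
  replace hx : M x + M.ker.starProjection x = 0 := hx
  have hMx : M x ∈ M.kerᗮ := by
    rw [← IsStarNormal.orthogonal_range hM]
    exact Submodule.le_orthogonal_orthogonal _ (LinearMap.mem_range_self _ x)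
  have hPx : M.ker.starProjection x ∈ M.kerᗮ := by
    rw [← neg_eq_of_add_eq_zero_right hx]
    exact neg_mem hMx
  have hPx0 : M.ker.starProjection x = 0 :=
    (Submodule.orthogonal_disjoint _).le_bot ⟨M.ker.starProjection_apply_mem x, hPx⟩
  have hxker : x ∈ M.ker := by
    simpa [hPx0] using hx
  rw [← Submodule.starProjection_eq_self_iff.mpr hxker, hPx0]

theorem eq_mul_inverse_add_starProjection_ker {M R S : E →L[𝕜] E} (hM : IsStarNormal M)
    (hker : ∀ v ∈ M.ker, S v = 0) (horth : ∀ x ∈ M.kerᗮ, S (M x) = R x) :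
    S = R * (1 - M.ker.starProjection) * Ring.inverse (M + M.ker.starProjection) :=
  (Ring.eq_mul_inverse_iff_mul_eq _ _ _ (isUnit_add_starProjection_ker hM)).mpr
    (mul_add_starProjection_ker hker horth)

theorem continuousOn_of_finrank_ker_const {X : Type*} [TopologicalSpace X] {s : Set X}
    {M R S : X → E →L[𝕜] E} (hM : ContinuousOn M s) (hR : ContinuousOn R s)
    (hnormal : ∀ x ∈ s, IsStarNormal (M x))
    (hdim : ∀ x ∈ s, ∀ y ∈ s, finrank 𝕜 (M x).ker = finrank 𝕜 (M y).ker)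
    (hker : ∀ x ∈ s, ∀ v ∈ (M x).ker, S x v = 0)
    (horth : ∀ x ∈ s, ∀ v ∈ (M x).kerᗮ, S x (M x v) = R x v) :
    ContinuousOn S s := by
  have hP := continuousOn_starProjection_ker hM hdim
  have hinv : ContinuousOn (fun x => Ring.inverse (M x + (M x).ker.starProjection)) s :=
    fun x hx => by
      have := NormedRing.inverse_continuousAt (isUnit_add_starProjection_ker (hnormal x hx)).unit
      rw [IsUnit.unit_spec] at this
      exact this.comp_continuousWithinAt (f := fun y => M y + (M y).ker.starProjection)
        ((hM.add hP) x hx)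
  exact ((hR.mul (continuousOn_const.sub hP)).mul hinv).congr fun x hx =>
    eq_mul_inverse_add_starProjection_ker (hnormal x hx) (hker x hx) (horth x hx)

end ContinuousLinearMap

namespace Matrix

variable {𝕜 n : Type*} [RCLike 𝕜] [Fintype n] [DecidableEq n]

theorem continuousOn_toEuclideanCLM_comp_iff {X : Type*} [TopologicalSpace X]
    {f : X → Matrix n n 𝕜} {s : Set X} :
    ContinuousOn (fun x => toEuclideanCLM (n := n) (𝕜 := 𝕜) (f x)) s ↔ ContinuousOn f s :=
  (toEuclideanCLM (n := n) (𝕜 := 𝕜)).toAlgEquiv.toLinearEquiv.toContinuousLinearEquiv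
    |>.comp_continuousOn_iff

theorem finrank_ker_toEuclideanCLM_add_rank (M : Matrix n n 𝕜) :
    finrank 𝕜 (toEuclideanCLM (n := n) (𝕜 := 𝕜) M).ker + M.rank = Fintype.card n := by
  have hrank : M.rank = finrank 𝕜 (toEuclideanCLM (n := n) (𝕜 := 𝕜) M).range := by
    rw [rank_eq_finrank_range_toLin M (PiLp.basisFun 2 𝕜 n) (PiLp.basisFun 2 𝕜 n),
      ← toLpLin_eq_toLin]
    rfl
  rw [hrank, add_comm, LinearMap.finrank_range_add_finrank_ker, finrank_euclideanSpace]

theorem mem_ker_toEuclideanCLM_sub_one {U : Matrix n n 𝕜} {v : EuclideanSpace 𝕜 n} :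
    v ∈ (toEuclideanCLM (n := n) (𝕜 := 𝕜) U - 1).ker ↔ U *ᵥ v.ofLp = v.ofLp := by
  rw [LinearMap.mem_ker, ← (WithLp.ofLp_injective 2).eq_iff]
  simp [sub_eq_zero]

end Matrix

open Matrix

theorem cInner_eq_inner {N : ℕ} (Y Z : Fin N → ℂ) :
    cInner Y Z = inner ℂ (WithLp.toLp 2 Z) (WithLp.toLp 2 Y) := by
  simp only [cInner, PiLp.inner_apply, RCLike.inner_apply]

namespace IsCayleyBoundaryMatrix

variable {N : ℕ} {U A : Matrix (Fin N) (Fin N) ℂ}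

theorem toEuclideanCLM_apply_of_mem_ker (h : IsCayleyBoundaryMatrix U A)
    {v : EuclideanSpace ℂ (Fin N)} (hv : v ∈ (toEuclideanCLM (n := Fin N) (𝕜 := ℂ) U - 1).ker) :
    toEuclideanCLM (n := Fin N) (𝕜 := ℂ) A v = 0 := by
  rw [← (WithLp.ofLp_injective 2).eq_iff]
  simpa using h.1 _ (mem_ker_toEuclideanCLM_sub_one.mp hv)

theorem toEuclideanCLM_apply_sub_one (h : IsCayleyBoundaryMatrix U A)
    {x : EuclideanSpace ℂ (Fin N)}
    (hx : x ∈ (toEuclideanCLM (n := Fin N) (𝕜 := ℂ) U - 1).kerᗮ) :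
    toEuclideanCLM (n := Fin N) (𝕜 := ℂ) A ((toEuclideanCLM (n := Fin N) (𝕜 := ℂ) U - 1) x)
      = ((-Complex.I) • (toEuclideanCLM (n := Fin N) (𝕜 := ℂ) U + 1)) x := by
  have hperp : ∀ v : Fin N → ℂ, U *ᵥ v = v → cInner x.ofLp v = 0 := fun v hv => by
    rw [cInner_eq_inner]
    exact Submodule.inner_right_of_mem_orthogonal
      (mem_ker_toEuclideanCLM_sub_one.mpr hv) hx
  rw [← (WithLp.ofLp_injective 2).eq_iff]
  simpa [sub_mulVec, add_mulVec, mulVec_sub] using h.2 _ hperp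

end IsCayleyBoundaryMatrix

/-- **Continuity of `A(λ)`.**  If `U(λ)` is a continuous function on `(σ, τ)` with unitary
`2n × 2n` values such that `rank (U(λ) − 1)` is constant on `(σ, τ)`, then the
matrix-function `A(λ) = (1/2π) ∮_Γ ((z+1)/(z−1)) (U(λ) − z)⁻¹ dz` (with `Γ` as above,
encoded via `IsCayleyBoundaryMatrix`) is continuous on `(σ, τ)`. -/
theorem A_continuous_of_rank_const
    (n : ℕ) (σ τ : ℝ)
    (Uf : ℝ → Matrix (Fin (2 * n)) (Fin (2 * n)) ℂ)
    (hUu : ∀ lam ∈ Set.Ioo σ τ, Uf lam ∈ Matrix.unitaryGroup (Fin (2 * n)) ℂ)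
    (hUc : ContinuousOn Uf (Set.Ioo σ τ))
    (hrank : ∀ lam₁ ∈ Set.Ioo σ τ, ∀ lam₂ ∈ Set.Ioo σ τ,
      (Uf lam₁ - 1).rank = (Uf lam₂ - 1).rank)
    (A : ℝ → Matrix (Fin (2 * n)) (Fin (2 * n)) ℂ)
    (hA : ∀ lam ∈ Set.Ioo σ τ, IsCayleyBoundaryMatrix (Uf lam) (A lam)) :
    ContinuousOn A (Set.Ioo σ τ) := by
  let T lam := toEuclideanCLM (n := Fin (2 * n)) (𝕜 := ℂ) (Uf lam)
  have hT : ContinuousOn T (Ioo σ τ) := continuousOn_toEuclideanCLM_comp_iff.mpr hUc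
  have hT_sub_one lam : T lam - 1 = toEuclideanCLM (n := Fin (2 * n)) (𝕜 := ℂ) (Uf lam - 1) := by
    rw [map_sub, map_one]
  have hnormal lam (hlam : lam ∈ Ioo σ τ) : IsStarNormal (T lam - 1) :=
    isStarNormal_sub_one_of_mem_unitary (Unitary.map_mem _ (hUu lam hlam))
  have hdim lam₁ (h₁ : lam₁ ∈ Ioo σ τ) lam₂ (h₂ : lam₂ ∈ Ioo σ τ) :
      finrank ℂ (T lam₁ - 1).ker = finrank ℂ (T lam₂ - 1).ker := by
    have := finrank_ker_toEuclideanCLM_add_rank (Uf lam₁ - 1)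
    have := finrank_ker_toEuclideanCLM_add_rank (Uf lam₂ - 1)
    rw [hT_sub_one, hT_sub_one]
    have := hrank lam₁ h₁ lam₂ h₂
    omega
  rw [← continuousOn_toEuclideanCLM_comp_iff]
  exact ContinuousLinearMap.continuousOn_of_finrank_ker_const (hT.sub continuousOn_const)
    ((hT.add continuousOn_const).const_smul (-Complex.I)) hnormal hdim
    (fun lam hlam _ => (hA lam hlam).toEuclideanCLM_apply_of_mem_ker)
    (fun lam hlam _ => (hA lam hlam).toEuclideanCLM_apply_sub_one)
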